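/- Let (u,v,w) be a metric triangle of a partial cube G such that the convex hull of {u,v,w} induces a Cartesian product of even cycles ∏_i C_i. Then for each factor i, the projections (pr_i(u), pr_i(v), pr_i(w)) form a metric triangle of C_i, and hence each C_i has length greater than 4. -/

import Mathlib

open SimpleGraph

universe u

variable {V : Type u}

/-- The geodesic interval between two vertices: the set of vertices lying on
shortest paths between them. -/
def gInterval (G : SimpleGraph V) (x y : V) : Set V :=
  {z | G.dist x z + G.dist z y = G.dist x y}

/-- A set of vertices is (geodesically) convex. -/
def GConvex (G : SimpleGraph V) (C : Set V) : Prop :=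
  ∀ x ∈ C, ∀ y ∈ C, gInterval G x y ⊆ C

/-- `Wside G a b` is the set `W_ab` of vertices strictly closer to `a` than to `b`. -/
def Wside (G : SimpleGraph V) (a b : V) : Set V :=
  {x | G.dist a x < G.dist b x}

/-- `Uside G a b` is the set `U_ab` of vertices of `W_ab` having a neighbour in `W_ba`. -/
def Uside (G : SimpleGraph V) (a b : V) : Set V :=
  {x | x ∈ Wside G a b ∧ ∃ y, G.Adj x y ∧ y ∈ Wside G b a}

/-- A graph is bipartite if it admits a proper 2-colouring. -/
def IsBipartiteGraph (G : SimpleGraph V) : Prop :=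
  ∃ c : V → Bool, ∀ u v, G.Adj u v → c u ≠ c v

/-- A partial cube: a connected bipartite graph all of whose half-spaces `W_ab`, `W_ba`
are convex (Djoković's characterization). -/
def IsPartialCube (G : SimpleGraph V) : Prop :=
  G.Connected ∧ IsBipartiteGraph G ∧
    ∀ a b, G.Adj a b → GConvex G (Wside G a b) ∧ GConvex G (Wside G b a)

/-- The Djoković–Winkler relation Θ between (unordered) edges. -/
def ThetaRel (G : SimpleGraph V) (e f : Sym2 V) : Prop :=
  ∃ x y u v : V, e = s(x, y) ∧ f = s(u, v) ∧
    G.dist x u + G.dist y v ≠ G.dist x v + G.dist y u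

/-- The geodesic convex hull of a set of vertices. -/
def gConvexHull (G : SimpleGraph V) (A : Set V) : Set V :=
  ⋂₀ {C : Set V | GConvex G C ∧ A ⊆ C}

/-- The Cartesian product of a family of graphs. -/
def cartProd {ι : Type*} {β : ι → Type*} (G : ∀ i, SimpleGraph (β i)) :
    SimpleGraph (∀ i, β i) where
  Adj x y := ∃ i, (G i).Adj (x i) (y i) ∧ ∀ j, j ≠ i → x j = y j
  symm := by
    refine ⟨?_⟩
    rintro x y ⟨i, hadj, h⟩
    exact ⟨i, hadj.symm, fun j hj => (h j hj).symm⟩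
  loopless := by
    refine ⟨?_⟩
    rintro x ⟨i, hadj, -⟩
    exact (G i).irrefl hadj

/-- A metric triangle: the three geodesic intervals pairwise intersect exactly
in their common endvertices. -/
def IsMetricTriangle {W : Type*} (H : SimpleGraph W) (a b c : W) : Prop :=
  gInterval H a b ∩ gInterval H a c = {a} ∧
  gInterval H b a ∩ gInterval H b c = {b} ∧
  gInterval H c a ∩ gInterval H c b = {c}

/-! Graph isomorphisms preserve distances, and so does passing to a convex subgraph; hence
`(u, v, w)` is a metric triangle of the product. Distances in a finite Cartesian product are
sums of coordinate distances, so intervals are products of intervals and a metric triangle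
projects to a metric triangle of every factor. The projection to factor `i` cannot collapse
to a point: the hull would then lie in a fibre `{x | x i = t}`, a proper convex subset. So the
three projections are distinct, and `C₄` has no such metric triangle since of any three of its
vertices one lies between the other two. -/

section Intervals

variable {W W' : Type*} {G : SimpleGraph W} {G' : SimpleGraph W'}

lemma mem_gInterval_left (a b : W) : a ∈ gInterval G a b := by
  simp [gInterval]

lemma mem_gInterval_right (a b : W) : b ∈ gInterval G a b := by
  simp [gInterval]

lemma gInterval_self (hG : G.Connected) (t : W) : gInterval G t t = {t} := by
  ext z
  simp only [gInterval, Set.mem_ofPred_eq, dist_self, Nat.add_eq_zero_iff, Set.mem_singleton_iff]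
  exact ⟨fun h => (hG.dist_eq_zero_iff.mp h.1).symm, by rintro rfl; simp⟩

lemma mem_gInterval_of_adj_of_adj {x y z : W} (hxz : G.Adj x z) (hzy : G.Adj z y)
    (hxy : x ≠ y) (hnadj : ¬G.Adj x y) : z ∈ gInterval G x y := by
  have hle : G.dist x y ≤ 2 := dist_le (.cons hxz (.cons hzy .nil))
  have hlt := (hxz.reachable.trans hzy.reachable).one_lt_dist_of_ne_of_not_adj hxy hnadj
  change G.dist x z + G.dist z y = G.dist x y
  rw [dist_eq_one_iff_adj.mpr hxz, dist_eq_one_iff_adj.mpr hzy]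
  omega

lemma SimpleGraph.Walk.mem_gInterval_of_length_eq_dist {x y z : W} (p : G.Walk x y)
    (hp : p.length = G.dist x y) (hz : z ∈ p.support) : z ∈ gInterval G x y := by
  classical
  have h₁ : G.dist x z ≤ (p.takeUntil z hz).length := dist_le _
  have h₂ : G.dist z y ≤ (p.dropUntil z hz).length := dist_le _
  have hsplit : (p.takeUntil z hz).length + (p.dropUntil z hz).length = p.length := by
    rw [← Walk.length_append, p.take_spec hz]
  have htri := (p.takeUntil z hz).reachable.dist_triangle_left y
  change G.dist x z + G.dist z y = G.dist x y
  omega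

lemma SimpleGraph.Hom.edist_map_le (f : G →g G') (a b : W) :
    G'.edist (f a) (f b) ≤ G.edist a b := by
  by_cases hr : G.Reachable a b
  · obtain ⟨p, hp⟩ := hr.exists_walk_length_eq_edist
    rw [← hp, ← Walk.length_map f p]
    exact edist_le _
  · rw [edist_eq_top_of_not_reachable hr]
    exact le_top

lemma SimpleGraph.Iso.dist_map (φ : G ≃g G') (a b : W) : G'.dist (φ a) (φ b) = G.dist a b := by
  have h := le_antisymm (φ.toHom.edist_map_le a b)
    (by simpa using φ.symm.toHom.edist_map_le (φ a) (φ b))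
  exact congrArg ENat.toNat h

lemma SimpleGraph.Iso.gInterval_eq_preimage (φ : G ≃g G') (a b : W) :
    gInterval G a b = φ ⁻¹' gInterval G' (φ a) (φ b) := by
  ext z
  simp only [gInterval, Set.mem_ofPred_eq, Set.mem_preimage, φ.dist_map]

end Intervals

section Convexity

variable {W W' : Type*} {G : SimpleGraph W} {G' : SimpleGraph W'}

lemma GConvex.edist_induce {S : Set W} (hS : GConvex G S) (a b : S) :
    (G.induce S).edist a b = G.edist a b := by
  refine le_antisymm ?_ ((Embedding.induce S).toHom.edist_map_le a b)
  by_cases hr : G.Reachable a b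
  · obtain ⟨p, hp⟩ := hr.exists_walk_length_eq_dist
    have hsub : ∀ z ∈ p.support, z ∈ S := fun z hz =>
      hS a a.2 b b.2 (p.mem_gInterval_of_length_eq_dist hp hz)
    calc (G.induce S).edist a b ≤ (p.induce S hsub).length := edist_le _
      _ = G.edist a b := by
        have hlen := congrArg Walk.length (p.map_induce hsub)
        rw [Walk.length_map] at hlen
        rw [hlen]
        exact (congrArg _ hp).trans hr.coe_dist_eq_edist
  · rw [edist_eq_top_of_not_reachable hr]
    exact le_top

lemma GConvex.gInterval_induce {S : Set W} (hS : GConvex G S) (a b : S) :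
    gInterval (G.induce S) a b = Subtype.val ⁻¹' gInterval G a b := by
  ext z
  simp only [gInterval, Set.mem_ofPred_eq, Set.mem_preimage, SimpleGraph.dist, hS.edist_induce]

lemma GConvex.image_val {S : Set W} (hS : GConvex G S) {D : Set S}
    (hD : GConvex (G.induce S) D) : GConvex G (Subtype.val '' D) := by
  rintro _ ⟨x, hx, rfl⟩ _ ⟨y, hy, rfl⟩ z hz
  have hzS : z ∈ S := hS x x.2 y y.2 hz
  exact ⟨⟨z, hzS⟩, hD x hx y hy (by rw [hS.gInterval_induce]; exact hz), rfl⟩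

lemma GConvex.preimage_iso (φ : G ≃g G') {C : Set W'} (hC : GConvex G' C) :
    GConvex G (φ ⁻¹' C) := by
  intro x hx y hy z hz
  rw [φ.gInterval_eq_preimage] at hz
  exact hC _ hx _ hy hz

lemma gConvex_gConvexHull (A : Set W) : GConvex G (gConvexHull G A) := by
  intro x hx y hy z hz
  simp only [gConvexHull, Set.mem_sInter] at hx hy ⊢
  exact fun C hC => hC.1 x (hx C hC) y (hy C hC) hz

lemma subset_gConvexHull (A : Set W) : A ⊆ gConvexHull G A :=
  Set.subset_sInter fun _ hC => hC.2

lemma gConvexHull_subset {A C : Set W} (hC : GConvex G C) (hA : A ⊆ C) :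
    gConvexHull G A ⊆ C :=
  Set.sInter_subset_of_mem ⟨hC, hA⟩

end Convexity

section MetricTriangle

variable {W W' : Type*} {H : SimpleGraph W} {H' : SimpleGraph W'} {a b c : W}

lemma eq_of_inter_gInterval_eq_singleton {x y z : W}
    (hI : gInterval H x y ∩ gInterval H x z = {x}) (hy : y ∈ gInterval H x z) : y = x := by
  simpa using hI.subset ⟨mem_gInterval_right x y, hy⟩

lemma IsMetricTriangle.comap (f : W → W') (hf : Function.Injective f)
    (hI : ∀ x y, gInterval H x y = f ⁻¹' gInterval H' (f x) (f y))
    (h : IsMetricTriangle H' (f a) (f b) (f c)) : IsMetricTriangle H a b c := by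
  have corner : ∀ {x y z : W}, gInterval H' (f x) (f y) ∩ gInterval H' (f x) (f z) = {f x} →
      gInterval H x y ∩ gInterval H x z = {x} := by
    intro x y z hxyz
    rw [hI, hI, ← Set.preimage_inter, hxyz, ← Set.image_singleton, hf.preimage_image]
  exact ⟨corner h.1, corner h.2.1, corner h.2.2⟩

lemma IsMetricTriangle.map_iso (φ : H ≃g H') (h : IsMetricTriangle H a b c) :
    IsMetricTriangle H' (φ a) (φ b) (φ c) :=
  IsMetricTriangle.comap φ.symm φ.symm.injective φ.symm.gInterval_eq_preimage (by simpa using h)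

lemma IsMetricTriangle.induce {G : SimpleGraph W} {S : Set W} (h : IsMetricTriangle G a b c)
    (hS : GConvex G S) (ha : a ∈ S) (hb : b ∈ S) (hc : c ∈ S) :
    IsMetricTriangle (G.induce S) ⟨a, ha⟩ ⟨b, hb⟩ ⟨c, hc⟩ :=
  IsMetricTriangle.comap Subtype.val Subtype.val_injective hS.gInterval_induce h

lemma IsMetricTriangle.pairwise_ne (h : IsMetricTriangle H a b c) (hne : a ≠ b ∨ a ≠ c) :
    a ≠ b ∧ a ≠ c ∧ b ≠ c := by
  refine ⟨?_, ?_, ?_⟩ <;> rintro rfl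
  · have := eq_of_inter_gInterval_eq_singleton h.2.2 (mem_gInterval_right c a)
    simp_all
  · have := eq_of_inter_gInterval_eq_singleton h.2.1 (mem_gInterval_right b a)
    simp_all
  · have := eq_of_inter_gInterval_eq_singleton h.1 (mem_gInterval_right a b)
    simp_all

end MetricTriangle

namespace cartProd

variable {ι : Type*} {β : ι → Type*} (K : ∀ i, SimpleGraph (β i))

def updateHom [DecidableEq ι] (x : ∀ i, β i) (i : ι) : K i →g cartProd K where
  toFun c := Function.update x i c
  map_rel' {c d} h := ⟨i, by simpa using h, fun j hj => by simp [Function.update_of_ne hj]⟩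

@[simp]
lemma updateHom_apply [DecidableEq ι] (x : ∀ i, β i) (i : ι) (c : β i) :
    updateHom K x i c = Function.update x i c :=
  rfl

lemma exists_walk_length_le (hK : ∀ i, (K i).Connected) (s : Finset ι) :
    ∀ x y : ∀ i, β i, (∀ j ∉ s, x j = y j) →
      ∃ q : (cartProd K).Walk x y, q.length ≤ ∑ i ∈ s, (K i).dist (x i) (y i) := by
  classical
  induction s using Finset.induction with
  | empty =>
    intro x y hxy
    exact ⟨Walk.nil.copy rfl (funext fun j => hxy j (Finset.notMem_empty j)), by simp⟩
  | @insert i s hi ih =>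
    intro x y hxy
    obtain ⟨p, hp⟩ := (hK i).exists_walk_length_eq_dist (x i) (y i)
    obtain ⟨q₁, hq₁⟩ : ∃ q₁ : (cartProd K).Walk x (Function.update x i (y i)),
        q₁.length = p.length :=
      ⟨(p.map (updateHom K x i)).copy (by simp) (by simp),
        (Walk.length_copy _ _ _).trans (Walk.length_map _ _)⟩
    obtain ⟨q₂, hq₂⟩ := ih (Function.update x i (y i)) y fun j hj => by
      rcases eq_or_ne j i with rfl | hji
      · simp
      · rw [Function.update_of_ne hji]
        exact hxy j (by simp [hji, hj])
    have hs : ∑ j ∈ s, (K j).dist (Function.update x i (y i) j) (y j) =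
        ∑ j ∈ s, (K j).dist (x j) (y j) :=
      Finset.sum_congr rfl fun j hj => by
        rw [Function.update_of_ne (ne_of_mem_of_not_mem hj hi)]
    refine ⟨q₁.append q₂, ?_⟩
    rw [Walk.length_append, Finset.sum_insert hi, ← hs, hq₁, hp]
    omega

lemma sum_dist_le_length [Fintype ι] {x y : ∀ i, β i} (p : (cartProd K).Walk x y) :
    ∑ i, (K i).dist (x i) (y i) ≤ p.length := by
  induction p with
  | nil => simp
  | @cons x z y h p ih =>
    rw [Walk.length_cons]
    obtain ⟨i, hadj, heq⟩ := h
    have hreach : ∀ j, (K j).Reachable (x j) (z j) := fun j => by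
      rcases eq_or_ne j i with rfl | hj
      · exact hadj.reachable
      · rw [heq j hj]
    have hstep : ∑ j, (K j).dist (x j) (z j) = 1 := by
      rw [Finset.sum_eq_single i (fun j _ hj => by rw [heq j hj, dist_self]) (by simp)]
      exact dist_eq_one_iff_adj.mpr hadj
    calc ∑ j, (K j).dist (x j) (y j)
        ≤ ∑ j, ((K j).dist (x j) (z j) + (K j).dist (z j) (y j)) :=
          Finset.sum_le_sum fun j _ => (hreach j).dist_triangle_left (y j)
      _ ≤ p.length + 1 := by rw [Finset.sum_add_distrib, hstep]; omega

lemma dist_eq_sum [Fintype ι] (hK : ∀ i, (K i).Connected) (x y : ∀ i, β i) :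
    (cartProd K).dist x y = ∑ i, (K i).dist (x i) (y i) := by
  obtain ⟨q, hq⟩ := exists_walk_length_le K hK Finset.univ x y (by simp)
  obtain ⟨p, hp⟩ := q.reachable.exists_walk_length_eq_dist
  exact le_antisymm ((dist_le q).trans hq) (hp ▸ sum_dist_le_length K p)

lemma mem_gInterval_iff [Fintype ι] (hK : ∀ i, (K i).Connected) {x y z : ∀ i, β i} :
    z ∈ gInterval (cartProd K) x y ↔ ∀ i, z i ∈ gInterval (K i) (x i) (y i) := by
  simp only [gInterval, Set.mem_ofPred_eq, dist_eq_sum K hK, ← Finset.sum_add_distrib]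
  rw [eq_comm, Finset.sum_eq_sum_iff_of_le fun i _ => (hK i).dist_triangle]
  simp only [Finset.mem_univ, true_implies]
  exact forall_congr' fun _ => eq_comm

lemma update_mem_gInterval [Fintype ι] [DecidableEq ι] (hK : ∀ i, (K i).Connected)
    {x y : ∀ i, β i} {i : ι} {t : β i} (ht : t ∈ gInterval (K i) (x i) (y i)) :
    Function.update x i t ∈ gInterval (cartProd K) x y :=
  (mem_gInterval_iff K hK).mpr fun j => by
    rcases eq_or_ne j i with rfl | hj
    · simpa using ht
    · simpa [Function.update_of_ne hj] using mem_gInterval_left (G := K j) (x j) (y j)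

lemma gConvex_setOf_apply_eq [Fintype ι] (hK : ∀ i, (K i).Connected) (i : ι) (t : β i) :
    GConvex (cartProd K) {x | x i = t} := by
  intro x hx y hy z hz
  have hzi := (mem_gInterval_iff K hK).mp hz i
  simp only [Set.mem_ofPred_eq] at hx hy ⊢
  rwa [hx, hy, gInterval_self (hK i)] at hzi

lemma _root_.IsMetricTriangle.apply [Fintype ι] (hK : ∀ i, (K i).Connected)
    {a b c : ∀ i, β i} (h : IsMetricTriangle (cartProd K) a b c) (i : ι) :
    IsMetricTriangle (K i) (a i) (b i) (c i) := by
  classical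
  have corner : ∀ {x y z : ∀ i, β i},
      gInterval (cartProd K) x y ∩ gInterval (cartProd K) x z = {x} →
      gInterval (K i) (x i) (y i) ∩ gInterval (K i) (x i) (z i) = {x i} := by
    intro x y z hxyz
    ext t
    constructor
    · rintro ⟨hy, hz⟩
      have hx := hxyz.subset ⟨update_mem_gInterval K hK hy, update_mem_gInterval K hK hz⟩
      simpa using congrFun (Set.mem_singleton_iff.mp hx) i
    · rintro rfl
      exact ⟨mem_gInterval_left _ _, mem_gInterval_left _ _⟩
  exact ⟨corner h.1, corner h.2.1, corner h.2.2⟩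

lemma exists_apply_ne_of_iso_gConvexHull [Fintype ι] {W : Type*} {G : SimpleGraph W}
    {A : Set W} (φ : G.induce (gConvexHull G A) ≃g cartProd K) (hK : ∀ i, (K i).Connected)
    (i : ι) [Nontrivial (β i)] (t : β i) :
    ∃ x : gConvexHull G A, (x : W) ∈ A ∧ φ x i ≠ t := by
  classical
  by_contra! hA
  have hC : GConvex G (Subtype.val '' (φ ⁻¹' {p | p i = t})) :=
    (gConvex_gConvexHull A).image_val ((gConvex_setOf_apply_eq K hK i t).preimage_iso φ)
  have hAC : A ⊆ Subtype.val '' (φ ⁻¹' {p | p i = t}) := fun a ha =>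
    ⟨⟨a, subset_gConvexHull A ha⟩, hA _ ha, rfl⟩
  obtain ⟨s, hs⟩ := exists_ne t
  let p := Function.update (fun j => (hK j).nonempty.some) i s
  obtain ⟨y, hy, hyp⟩ := gConvexHull_subset hC hAC (φ.symm p).2
  rw [Subtype.val_injective hyp, Set.mem_preimage, φ.apply_symm_apply] at hy
  exact hs (by simpa [p] using hy)

end cartProd

lemma not_isMetricTriangle_cycleGraph_four {a b c : Fin 4} (hab : a ≠ b) (hac : a ≠ c)
    (hbc : b ≠ c) : ¬IsMetricTriangle (cycleGraph 4) a b c := by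
  intro h
  -- the middle vertex is adjacent to the two others, which are antipodal
  have hmid : ∀ a b c : Fin 4, a ≠ b → a ≠ c → b ≠ c →
      ((cycleGraph 4).Adj a b ∧ (cycleGraph 4).Adj b c ∧ ¬(cycleGraph 4).Adj a c) ∨
      ((cycleGraph 4).Adj b a ∧ (cycleGraph 4).Adj a c ∧ ¬(cycleGraph 4).Adj b c) ∨
      ((cycleGraph 4).Adj b c ∧ (cycleGraph 4).Adj c a ∧ ¬(cycleGraph 4).Adj b a) := by
    decide
  rcases hmid a b c hab hac hbc with ⟨h₁, h₂, h₃⟩ | ⟨h₁, h₂, h₃⟩ | ⟨h₁, h₂, h₃⟩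
  · exact hab (eq_of_inter_gInterval_eq_singleton h.1
      (mem_gInterval_of_adj_of_adj h₁ h₂ hac h₃)).symm
  · exact hab (eq_of_inter_gInterval_eq_singleton h.2.1
      (mem_gInterval_of_adj_of_adj h₁ h₂ hbc h₃))
  · exact hbc (eq_of_inter_gInterval_eq_singleton ((Set.inter_comm _ _).trans h.2.1)
      (mem_gInterval_of_adj_of_adj h₁ h₂ hab.symm h₃)).symm

lemma four_lt_of_isMetricTriangle_cycleGraph {n : ℕ} {a b c : Fin (2 * n)}
    (h : IsMetricTriangle (cycleGraph (2 * n)) a b c) (hab : a ≠ b) (hac : a ≠ c)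
    (hbc : b ≠ c) : 4 < 2 * n := by
  have hab' := Fin.val_injective.ne hab
  have hac' := Fin.val_injective.ne hac
  have hbc' := Fin.val_injective.ne hbc
  by_contra hle
  obtain rfl : n = 2 := by omega
  exact not_isMetricTriangle_cycleGraph_four hab hac hbc h

theorem stmt_17_general (G : SimpleGraph V)
    (u v w : V) (htri : IsMetricTriangle G u v w)
    {ι : Type*} [Fintype ι] (n : ι → ℕ)
    (φ : (G.induce (gConvexHull G {u, v, w})) ≃g
      cartProd (fun i => SimpleGraph.cycleGraph (2 * n i)))
    (hu : u ∈ gConvexHull G {u, v, w}) (hv : v ∈ gConvexHull G {u, v, w})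
    (hw : w ∈ gConvexHull G {u, v, w}) :
    ∀ i : ι,
      IsMetricTriangle (SimpleGraph.cycleGraph (2 * n i))
        (φ ⟨u, hu⟩ i) (φ ⟨v, hv⟩ i) (φ ⟨w, hw⟩ i) ∧ 4 < 2 * n i := by
  intro i
  have hK : ∀ j, (cycleGraph (2 * n j)).Connected := fun j =>
    have : Nonempty (Fin (2 * n j)) := ⟨φ ⟨u, hu⟩ j⟩
    ⟨cycleGraph_preconnected⟩
  have hmt := ((htri.induce (gConvex_gConvexHull _) hu hv hw).map_iso φ).apply _ hK i
  have : Nontrivial (Fin (2 * n i)) :=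
    Fin.nontrivial_iff_two_le.mpr (by have := (φ ⟨u, hu⟩ i).pos; omega)
  obtain ⟨x, hx, hxu⟩ :=
    cartProd.exists_apply_ne_of_iso_gConvexHull _ φ hK i (φ ⟨u, hu⟩ i)
  have hne : φ ⟨u, hu⟩ i ≠ φ ⟨v, hv⟩ i ∨ φ ⟨u, hu⟩ i ≠ φ ⟨w, hw⟩ i := by
    obtain rfl | rfl | rfl : x = ⟨u, hu⟩ ∨ x = ⟨v, hv⟩ ∨ x = ⟨w, hw⟩ := by
      simpa [Subtype.ext_iff] using hx
    exacts [absurd rfl hxu, .inl (Ne.symm hxu), .inr (Ne.symm hxu)]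
  obtain ⟨hab, hac, hbc⟩ := hmt.pairwise_ne hne
  exact ⟨hmt, four_lt_of_isMetricTriangle_cycleGraph hmt hab hac hbc⟩

/-- If the convex hull of a metric triangle of a partial cube induces a
Cartesian product of even cycles, then the projections of the triple onto each
factor form a metric triangle of that factor; hence each factor has length
greater than 4. -/
theorem stmt_17 (G : SimpleGraph V) (hG : IsPartialCube G)
    (u v w : V) (htri : IsMetricTriangle G u v w)
    {ι : Type*} [Fintype ι] (n : ι → ℕ) (hn : ∀ i, 2 ≤ n i)
    (φ : (G.induce (gConvexHull G {u, v, w})) ≃g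
      cartProd (fun i => SimpleGraph.cycleGraph (2 * n i)))
    (hu : u ∈ gConvexHull G {u, v, w}) (hv : v ∈ gConvexHull G {u, v, w})
    (hw : w ∈ gConvexHull G {u, v, w}) :
    ∀ i : ι,
      IsMetricTriangle (SimpleGraph.cycleGraph (2 * n i))
        (φ ⟨u, hu⟩ i) (φ ⟨v, hv⟩ i) (φ ⟨w, hw⟩ i) ∧ 4 < 2 * n i :=
  stmt_17_general G u v w htri n φ hu hv hw
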